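/- arXiv:2403.19684 — 5 statements merged into one kernel-verified Lean document; each statement's English description precedes it below -/
import Mathlib

section
/- Define c₁ = √(3 − φ) and c_{n+1} = √(2 + c_n), where φ = (1+√5)/2. Then π = (5/3)·lim_{n→∞} 2^n · √(2 − c_n). -/
open Filter Topology Real

/-!
With `α = 3π/5` one has `2 + 2 cos α = 3 - φ`, so the half-angle formula
`√(2 + 2 cos x) = 2 cos (x / 2)` gives `c n = 2 cos (α / 2ⁿ)` for `n ≥ 1`. Its companion
`√(2 - 2 cos x) = 2 sin (x / 2)` turns `2ⁿ √(2 - c n)` into `2ⁿ⁺¹ sin (α / 2ⁿ⁺¹)`, which tends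
to `α` because `sin x / x → 1`.
-/

namespace Real

theorem cos_three_pi_div_five : cos (3 * π / 5) = (1 - √5) / 4 := by
  have h5 : √5 ^ 2 = 5 := sq_sqrt (by norm_num)
  rw [show 3 * π / 5 = π - 2 * (π / 5) by ring, cos_pi_sub, cos_two_mul, cos_pi_div_five]
  linear_combination (-1 / 8 : ℝ) * h5

theorem sqrt_two_add_two_mul_cos {x : ℝ} (hl : -π ≤ x) (hr : x ≤ π) :
    √(2 + 2 * cos x) = 2 * cos (x / 2) := by
  rw [cos_half hl hr, show 2 + 2 * cos x = 2 ^ 2 * ((1 + cos x) / 2) by ring,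
    sqrt_mul' _ (by linarith [neg_one_le_cos x]), sqrt_sq zero_le_two]

theorem sqrt_two_sub_two_mul_cos {x : ℝ} (hl : 0 ≤ x) (hr : x ≤ 2 * π) :
    √(2 - 2 * cos x) = 2 * sin (x / 2) := by
  rw [sin_half_eq_sqrt hl hr, show 2 - 2 * cos x = 2 ^ 2 * ((1 - cos x) / 2) by ring,
    sqrt_mul' _ (by linarith [cos_le_one x]), sqrt_sq zero_le_two]

theorem tendsto_two_pow_mul_sin_div_two_pow (α : ℝ) :
    Tendsto (fun n : ℕ => 2 ^ n * sin (α / 2 ^ n)) atTop (𝓝 α) := by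
  have hθ : Tendsto (fun n : ℕ => α / 2 ^ n) atTop (𝓝 0) := by
    simpa using tendsto_const_nhds.div_atTop (tendsto_pow_atTop_atTop_of_one_lt one_lt_two)
  have hsinc : Tendsto (fun n : ℕ => α * sinc (α / 2 ^ n)) atTop (𝓝 α) := by
    simpa [sinc_zero] using ((continuous_sinc.tendsto 0).comp hθ).const_mul α
  refine hsinc.congr fun n => ?_
  rcases eq_or_ne α 0 with rfl | hα
  · simp
  · rw [sinc_of_ne_zero (by positivity)]
    field_simp

end Real

theorem eq_two_mul_cos_of_sqrt_two_add {α : ℝ} (hl : -π ≤ α) (hr : α ≤ π) {c : ℕ → ℝ}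
    (hc1 : c 1 = √(2 + 2 * cos α)) (hcrec : ∀ n, 1 ≤ n → c (n + 1) = √(2 + c n)) :
    ∀ n, 1 ≤ n → c n = 2 * cos (α / 2 ^ n) := by
  intro n hn
  induction n, hn using Nat.le_induction with
  | base => simpa [pow_one] using hc1.trans (sqrt_two_add_two_mul_cos hl hr)
  | succ n hn ih =>
    have h2n : (1 : ℝ) ≤ 2 ^ n := one_le_pow₀ one_le_two
    have hbound : |α / 2 ^ n| ≤ π := by
      rw [abs_div, abs_of_pos (by positivity : (0 : ℝ) < 2 ^ n), div_le_iff₀ (by positivity)]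
      nlinarith [abs_le.mpr ⟨hl, hr⟩, pi_pos]
    rw [hcrec n hn, ih, sqrt_two_add_two_mul_cos (abs_le.mp hbound).1 (abs_le.mp hbound).2,
      pow_succ, div_div]

theorem tendsto_two_pow_mul_sqrt_two_sub_of_sqrt_two_add {α : ℝ} (hl : 0 ≤ α) (hr : α ≤ π)
    {c : ℕ → ℝ} (hc1 : c 1 = √(2 + 2 * cos α)) (hcrec : ∀ n, 1 ≤ n → c (n + 1) = √(2 + c n)) :
    Tendsto (fun n : ℕ => 2 ^ n * √(2 - c n)) atTop (𝓝 α) := by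
  refine ((tendsto_two_pow_mul_sin_div_two_pow α).comp (tendsto_add_atTop_nat 1)).congr' ?_
  filter_upwards [eventually_ge_atTop 1] with n hn
  have h2n : (1 : ℝ) ≤ 2 ^ n := one_le_pow₀ one_le_two
  have hθ : α / 2 ^ n ≤ 2 * π := div_le_of_le_mul₀ (by positivity) (by positivity)
    (by nlinarith [pi_pos])
  rw [Function.comp_apply, eq_two_mul_cos_of_sqrt_two_add (by linarith) hr hc1 hcrec n hn,
    sqrt_two_sub_two_mul_cos (by positivity) hθ, pow_succ, div_div]
  ring

theorem pi_phi_two (φ : ℝ) (hφ : φ = (1 + Real.sqrt 5) / 2)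
    (c : ℕ → ℝ) (hc1 : c 1 = Real.sqrt (3 - φ))
    (hcrec : ∀ n, 1 ≤ n → c (n + 1) = Real.sqrt (2 + c n)) :
    Filter.Tendsto (fun n : ℕ => (5 / 3 : ℝ) * ((2 : ℝ) ^ n * Real.sqrt (2 - c n)))
      Filter.atTop (nhds Real.pi) := by
  have hc1' : c 1 = √(2 + 2 * cos (3 * π / 5)) := by
    rw [hc1, cos_three_pi_div_five, hφ]
    ring_nf
  have hlim := (tendsto_two_pow_mul_sqrt_two_sub_of_sqrt_two_add (by positivity)
    (by linarith [pi_pos]) hc1' hcrec).const_mul (5 / 3 : ℝ)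
  rwa [show (5 / 3 : ℝ) * (3 * π / 5) = π by ring] at hlim
end

section
/- Define c₁ = √(2 − φ) and c_{n+1} = √(2 + c_n), where φ = (1+√5)/2. Then π = (5/4)·lim_{n→∞} 2^n · √(2 − c_n). -/
open Filter Topology

theorem pi_phi_three (φ : ℝ) (hφ : φ = (1 + Real.sqrt 5) / 2)
    (c : ℕ → ℝ) (hc1 : c 1 = Real.sqrt (2 - φ))
    (hcrec : ∀ n, 1 ≤ n → c (n + 1) = Real.sqrt (2 + c n)) :
    Filter.Tendsto (fun n : ℕ => (5 / 4 : ℝ) * ((2 : ℝ) ^ n * Real.sqrt (2 - c n)))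
      Filter.atTop (nhds Real.pi) := by
  have pi_pos := Real.pi_pos
  have s5 : Real.sqrt 5 ^ 2 = 5 := Real.sq_sqrt (by norm_num)
  have s5ge : (1:ℝ) ≤ Real.sqrt 5 := by nlinarith [Real.sqrt_nonneg 5]
  -- c n = 2 cos (4π/(5·2^n)) for n ≥ 1
  have key : ∀ n, 1 ≤ n → c n = 2 * Real.cos (4 * Real.pi / (5 * 2 ^ n)) := by
    intro n hn
    induction n, hn using Nat.le_induction with
    | base =>
      have h25 : (4 : ℝ) * Real.pi / (5 * 2 ^ 1) = 2 * (Real.pi / 5) := by ring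
      have hcos : Real.cos (2 * (Real.pi / 5)) = (Real.sqrt 5 - 1) / 4 := by
        rw [Real.cos_two_mul, Real.cos_pi_div_five]
        nlinarith [s5]
      rw [hc1, h25, hcos, hφ]
      have : 2 - (1 + Real.sqrt 5) / 2 = ((Real.sqrt 5 - 1) / 2) ^ 2 := by nlinarith [s5]
      rw [this, Real.sqrt_sq (by linarith)]
      ring
    | succ n hn ih =>
      have h2n : (0:ℝ) < 2 ^ n := by positivity
      have half : (4 : ℝ) * Real.pi / (5 * 2 ^ n) / 2 = 4 * Real.pi / (5 * 2 ^ (n+1)) := by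
        rw [pow_succ]; ring
      have hle : (4 : ℝ) * Real.pi / (5 * 2 ^ (n+1)) ≤ Real.pi / 2 := by
        rw [div_le_div_iff₀ (by positivity) (by norm_num)]
        have h4 : (4:ℝ) ≤ 2 ^ (n+1) := by
          calc (4:ℝ) = 2 ^ 2 := by norm_num
          _ ≤ 2 ^ (n+1) := by
            apply pow_le_pow_right₀ (by norm_num) (by omega)
        nlinarith
      have hcosnn : 0 ≤ Real.cos (4 * Real.pi / (5 * 2 ^ (n+1))) :=
        Real.cos_nonneg_of_mem_Icc ⟨le_trans (by linarith : -(Real.pi/2) ≤ 0) (by positivity), hle⟩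
      have hsq : 2 + c n = (2 * Real.cos (4 * Real.pi / (5 * 2 ^ (n+1)))) ^ 2 := by
        rw [ih, ← half]
        have h := Real.cos_sq (4 * Real.pi / (5 * 2 ^ n) / 2)
        rw [show 2 * (4 * Real.pi / (5 * 2 ^ n) / 2) = 4 * Real.pi / (5 * 2 ^ n) by ring] at h
        nlinarith [h]
      rw [hcrec n hn, hsq, Real.sqrt_sq (by linarith)]
  -- √(2 - c n) = 2 sin (2π/(5·2^n)) for n ≥ 1
  have key2 : ∀ n, 1 ≤ n →
      Real.sqrt (2 - c n) = 2 * Real.sin (2 * Real.pi / (5 * 2 ^ n)) := by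
    intro n hn
    have h2n : (0:ℝ) < 2 ^ n := by positivity
    have h1 : (1:ℝ) ≤ 2 ^ n := by
      have := pow_le_pow_right₀ (by norm_num : (1:ℝ) ≤ 2) (Nat.zero_le n)
      simpa using this
    have half : (4 : ℝ) * Real.pi / (5 * 2 ^ n) / 2 = 2 * Real.pi / (5 * 2 ^ n) := by ring
    have hle : (2 : ℝ) * Real.pi / (5 * 2 ^ n) ≤ Real.pi := by
      rw [div_le_iff₀ (by positivity)]
      nlinarith
    have hsinnn : 0 ≤ Real.sin (2 * Real.pi / (5 * 2 ^ n)) :=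
      Real.sin_nonneg_of_nonneg_of_le_pi (by positivity) hle
    have hsq : 2 - c n = (2 * Real.sin (2 * Real.pi / (5 * 2 ^ n))) ^ 2 := by
      rw [key n hn, ← half]
      have h := Real.sin_sq_eq_half_sub (4 * Real.pi / (5 * 2 ^ n) / 2)
      rw [show 2 * (4 * Real.pi / (5 * 2 ^ n) / 2) = 4 * Real.pi / (5 * 2 ^ n) by ring] at h
      nlinarith [h]
    rw [hsq, Real.sqrt_sq (by positivity)]
  -- the limit
  set x : ℕ → ℝ := fun n => 2 * Real.pi / (5 * 2 ^ n) with hx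
  have hxpos : ∀ n, 0 < x n := fun n => by positivity
  have hx0 : Tendsto x atTop (𝓝 0) := by
    have : x = fun n => (2 * Real.pi / 5) * (1/2 : ℝ) ^ n := by
      funext n
      simp [hx, div_pow, one_pow]
      ring
    rw [this]
    simpa using (tendsto_pow_atTop_nhds_zero_of_lt_one (by norm_num) (by norm_num) :
      Tendsto (fun n : ℕ => (1/2 : ℝ) ^ n) atTop (𝓝 0)).const_mul (2 * Real.pi / 5)
  have hx0' : Tendsto x atTop (𝓝[≠] 0) :=
    tendsto_nhdsWithin_of_tendsto_nhds_of_eventually_within _ hx0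
      (Eventually.of_forall fun n => (hxpos n).ne')
  have hslope : Tendsto (fun y : ℝ => Real.sin y / y) (𝓝[≠] 0) (𝓝 1) := by
    have h := (Real.hasDerivAt_sin 0)
    rw [Real.cos_zero, hasDerivAt_iff_tendsto_slope] at h
    refine h.congr' ?_
    filter_upwards [self_mem_nhdsWithin] with y hy
    simp [slope, Real.sin_zero, div_eq_inv_mul]
  have hmain : Tendsto (fun n => Real.pi * (Real.sin (x n) / x n)) atTop (𝓝 Real.pi) := by
    have := (hslope.comp hx0').const_mul Real.pi
    simpa using this
  refine hmain.congr' ?_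
  filter_upwards [eventually_ge_atTop 1] with n hn
  rw [key2 n hn]
  have h2n : ((2:ℝ) ^ n) ≠ 0 := by positivity
  have hxn : x n = 2 * Real.pi / (5 * 2 ^ n) := rfl
  rw [hxn]
  field_simp
  ring
end

section
/- Define c₁ = √2 and c_{n+1} = √(2 + c_n). Then π = lim_{n→∞} 2^{n+1} · √(2 − c_n) (Viète-type nested radical formula from the square). -/
open Filter Topology

/-
The recurrence gives `c n = 2 cos (π / 2^(n+1))`, so `2^(n+1) √(2 - c n) = 2^(n+2) sin (π / 2^(n+2))`.
Since `x - x³/6 < sin x < x`, this lies in `(π - 1/4^n, π)`.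
-/

namespace Real

theorem tendsto_two_pow_mul_sqrt_two_sub_sqrtTwoAddSeries :
    Tendsto (fun n : ℕ => 2 ^ (n + 1) * √(2 - sqrtTwoAddSeries 0 n)) atTop (𝓝 π) := by
  have h_err : Tendsto (fun n : ℕ => π - 1 / 4 ^ n) atTop (𝓝 π) := by
    simpa using tendsto_const_nhds.sub
      (tendsto_pow_atTop_nhds_zero_of_lt_one (by norm_num : (0 : ℝ) ≤ 1 / 4) (by norm_num))
  refine tendsto_of_tendsto_of_tendsto_of_le_of_le h_err tendsto_const_nhds (fun n => ?_)
    (fun n => (pi_gt_sqrtTwoAddSeries n).le)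
  linarith [pi_lt_sqrtTwoAddSeries n]

end Real

theorem eq_sqrtTwoAddSeries_of_sqrt_two_add (c : ℕ → ℝ) (hc1 : c 1 = √2)
    (hcrec : ∀ n, 1 ≤ n → c (n + 1) = √(2 + c n)) {n : ℕ} (hn : 1 ≤ n) :
    c n = Real.sqrtTwoAddSeries 0 n := by
  induction n, hn using Nat.le_induction with
  | base => simp [hc1]
  | succ n hn ih => rw [hcrec n hn, ih, Real.sqrtTwoAddSeries]

theorem pi_viete (c : ℕ → ℝ) (hc1 : c 1 = Real.sqrt 2)
    (hcrec : ∀ n, 1 ≤ n → c (n + 1) = Real.sqrt (2 + c n)) :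
    Filter.Tendsto (fun n : ℕ => (1 : ℝ) * ((2 : ℝ) ^ (n + 1) * Real.sqrt (2 - c n)))
      Filter.atTop (nhds Real.pi) := by
  refine Real.tendsto_two_pow_mul_sqrt_two_sub_sqrtTwoAddSeries.congr' ?_
  filter_upwards [eventually_ge_atTop 1] with n hn
  rw [eq_sqrtTwoAddSeries_of_sqrt_two_add c hc1 hcrec hn, one_mul]
end

section
/- Define c₁ = √(2 − √2) and c_{n+1} = √(2 + c_n). Then π = (1/3)·lim_{n→∞} 2^{n+2} · √(2 − c_n). -/
open Filter Topology Real

theorem pi_servi2 (c : ℕ → ℝ) (hc1 : c 1 = Real.sqrt (2 - Real.sqrt 2))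
    (hcrec : ∀ n, 1 ≤ n → c (n + 1) = Real.sqrt (2 + c n)) :
    Filter.Tendsto (fun n : ℕ => (1 / 3 : ℝ) * ((2 : ℝ) ^ (n + 2) * Real.sqrt (2 - c n)))
      Filter.atTop (nhds Real.pi) := by
  have pi_pos := Real.pi_pos
  -- angle bound: 3π/2^(n+2) ∈ (0, π) for n ≥ 1, in fact ≤ 3π/8
  have hθpos : ∀ n : ℕ, 0 < 3 * π / 2 ^ (n + 2) := by
    intro n; positivity
  have hθle : ∀ n : ℕ, 1 ≤ n → 3 * π / 2 ^ (n + 2) ≤ 3 * π / 8 := by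
    intro n hn
    apply div_le_div_of_nonneg_left (by positivity) (by norm_num)
    calc (8 : ℝ) = 2 ^ 3 := by norm_num
    _ ≤ 2 ^ (n + 2) := by
        apply pow_le_pow_right₀ (by norm_num)
        omega
  -- closed form
  have hform : ∀ n : ℕ, 1 ≤ n → c n = 2 * Real.cos (3 * π / 2 ^ (n + 2)) := by
    intro n hn
    induction n, hn using Nat.le_induction with
    | base =>
      rw [hc1]
      have h8 : 3 * π / 2 ^ (1 + 2) = (3 * π / 4) / 2 := by ring
      rw [h8, Real.cos_half (by linarith) (by linarith)]
      have hc34 : Real.cos (3 * π / 4) = -(Real.sqrt 2 / 2) := by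
        have : (3 : ℝ) * π / 4 = π - π / 4 := by ring
        rw [this, Real.cos_pi_sub, Real.cos_pi_div_four]
      rw [hc34]
      rw [show (1 + -(Real.sqrt 2 / 2)) / 2 = (2 - Real.sqrt 2) / 4 by ring]
      rw [show (2 - Real.sqrt 2) / 4 = (2 - Real.sqrt 2) / 2 ^ 2 by norm_num]
      rw [Real.sqrt_div' _ (by norm_num), Real.sqrt_sq (by norm_num)]
      ring
    | succ n hn ih =>
      rw [hcrec n hn, ih]
      have hθ := hθpos n
      have hθ' := hθle n hn
      have hcosnn : 0 ≤ Real.cos (3 * π / 2 ^ (n + 2)) :=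
        Real.cos_nonneg_of_mem_Icc ⟨by linarith, by linarith⟩
      have key : 3 * π / 2 ^ (n + 1 + 2) = (3 * π / 2 ^ (n + 2)) / 2 := by
        rw [pow_succ]
        ring
      rw [key, Real.cos_half (by linarith) (by linarith)]
      rw [show (1 + Real.cos (3 * π / 2 ^ (n + 2))) / 2
          = (2 + 2 * Real.cos (3 * π / 2 ^ (n + 2))) / 2 ^ 2 by ring]
      rw [Real.sqrt_div' _ (by norm_num), Real.sqrt_sq (by norm_num)]
      ring
  -- sqrt(2 - c n) = 2 sin(3π/2^(n+3))
  have hsin : ∀ n : ℕ, 1 ≤ n →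
      Real.sqrt (2 - c n) = 2 * Real.sin (3 * π / 2 ^ (n + 3)) := by
    intro n hn
    rw [hform n hn]
    have hθ := hθpos n
    have hθ' := hθle n hn
    have key : 3 * π / 2 ^ (n + 3) = (3 * π / 2 ^ (n + 2)) / 2 := by
      rw [pow_succ]; ring
    rw [key, Real.sin_half_eq_sqrt (by linarith) (by linarith)]
    rw [show (1 - Real.cos (3 * π / 2 ^ (n + 2))) / 2
        = (2 - 2 * Real.cos (3 * π / 2 ^ (n + 2))) / 2 ^ 2 by ring]
    rw [Real.sqrt_div' _ (by norm_num), Real.sqrt_sq (by norm_num)]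
    ring
  -- the limit of 2^(n+3) * sin(3π/2^(n+3)) is 3π
  have ht0 : Tendsto (fun n : ℕ => 3 * π / 2 ^ (n + 3)) atTop (𝓝[≠] (0 : ℝ)) := by
    apply tendsto_nhdsWithin_of_tendsto_nhds_of_eventually_within
    · apply Tendsto.div_atTop (tendsto_const_nhds)
      exact (tendsto_pow_atTop_atTop_of_one_lt (by norm_num : (1:ℝ) < 2)).comp
        (tendsto_add_atTop_nat 3)
    · filter_upwards with n
      have : (0:ℝ) < 3 * π / 2 ^ (n + 3) := by positivity
      exact this.ne'
  have hslope : Tendsto (fun x : ℝ => Real.sin x / x) (𝓝[≠] (0 : ℝ)) (𝓝 1) := by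
    have h := (Real.hasDerivAt_sin 0)
    rw [Real.cos_zero, hasDerivAt_iff_tendsto_slope] at h
    refine h.congr' ?_
    filter_upwards [self_mem_nhdsWithin] with x hx
    simp [slope, hx, div_eq_inv_mul]
  have hlim : Tendsto (fun n : ℕ => (2 : ℝ) ^ (n + 3) * Real.sin (3 * π / 2 ^ (n + 3)))
      atTop (𝓝 (3 * π)) := by
    have comp := (hslope.comp ht0).const_mul (3 * π)
    rw [mul_one] at comp
    refine comp.congr fun n => ?_
    have h2 : (2 : ℝ) ^ (n + 3) ≠ 0 := by positivity
    simp only [Function.comp]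
    field_simp
  -- conclude
  have hmain : Tendsto (fun n : ℕ => (1 / 3 : ℝ) * ((2 : ℝ) ^ (n + 3) * Real.sin (3 * π / 2 ^ (n + 3))))
      atTop (𝓝 π) := by
    have := hlim.const_mul (1 / 3 : ℝ)
    rwa [show (1 / 3 : ℝ) * (3 * π) = π by ring] at this
  refine hmain.congr' ?_
  filter_upwards [eventually_ge_atTop 1] with n hn
  rw [hsin n hn]
  rw [show (n + 3) = (n + 2) + 1 from rfl, pow_succ]
  ring
end

section
/- Define c₁ = √(2 − √3) and c_{n+1} = √(2 + c_n). Then π = (3/5)·lim_{n→∞} 2^{n+1} · √(2 − c_n). -/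
open Filter Topology

theorem pi_servi4 (c : ℕ → ℝ) (hc1 : c 1 = Real.sqrt (2 - Real.sqrt 3))
    (hcrec : ∀ n, 1 ≤ n → c (n + 1) = Real.sqrt (2 + c n)) :
    Filter.Tendsto (fun n : ℕ => (3 / 5 : ℝ) * ((2 : ℝ) ^ (n + 1) * Real.sqrt (2 - c n)))
      Filter.atTop (nhds Real.pi) := by
  have hπ := Real.pi_pos
  set π := Real.pi with hπdef
  set θ : ℕ → ℝ := fun n => 5 * π / (3 * 2 ^ (n + 1)) with hθdef
  have hθpos : ∀ n, 0 < θ n := fun n => by positivity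
  have hθle : ∀ n, 1 ≤ n → θ n ≤ π / 2 := by
    intro n hn
    have h4 : (4 : ℝ) ≤ 2 ^ (n + 1) := by
      calc (4 : ℝ) = 2 ^ 2 := by norm_num
        _ ≤ 2 ^ (n + 1) := by
          apply pow_le_pow_right₀ (by norm_num)
          omega
    rw [hθdef]
    rw [div_le_iff₀ (by positivity)]
    nlinarith
  -- closed form for c n
  have key : ∀ n, 1 ≤ n → c n = 2 * Real.cos (θ n) := by
    intro n hn
    induction n with
    | zero => omega
    | succ m ih =>
      rcases Nat.lt_or_ge m 1 with hm | hm
      · -- base case m = 0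
        interval_cases m
        have hθ1 : θ 1 = 5 * π / 12 := by rw [hθdef]; norm_num
        have hcosnn : 0 ≤ Real.cos (5 * π / 12) :=
          Real.cos_nonneg_of_mem_Icc ⟨by linarith, by linarith⟩
        have h1 : Real.cos (5 * π / 12) ^ 2 = 1 / 2 + Real.cos (2 * (5 * π / 12)) / 2 :=
          Real.cos_sq _
        have h2 : (2 : ℝ) * (5 * π / 12) = π - π / 6 := by ring
        rw [h2, Real.cos_pi_sub, Real.cos_pi_div_six] at h1
        have hsq : (2 : ℝ) - Real.sqrt 3 = (2 * Real.cos (5 * π / 12)) ^ 2 := by nlinarith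
        rw [hc1, hθ1, hsq, Real.sqrt_sq (by linarith)]
      · -- inductive step m ≥ 1
        have ihm := ih hm
        have hrec := hcrec m hm
        have hhalf : θ m = 2 * θ (m + 1) := by
          rw [hθdef]
          simp only
          rw [pow_succ]
          field_simp
          ring
        have hcosnn : 0 ≤ Real.cos (θ (m + 1)) := by
          apply Real.cos_nonneg_of_mem_Icc
          constructor
          · have := hθpos (m + 1); linarith
          · exact hθle (m + 1) (by omega)
        have hc2 : Real.cos (θ m) = 2 * Real.cos (θ (m + 1)) ^ 2 - 1 := by
          rw [hhalf, Real.cos_two_mul]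
        have hsq : (2 : ℝ) + c m = (2 * Real.cos (θ (m + 1))) ^ 2 := by
          rw [ihm, hc2]; ring
        rw [hrec, hsq, Real.sqrt_sq (by linarith)]
  -- express sqrt (2 - c n) via sin
  have hsinpos : ∀ n, 0 ≤ Real.sin (θ n / 2) := by
    intro n
    apply Real.sin_nonneg_of_nonneg_of_le_pi
    · have := hθpos n; linarith
    · have h : θ n ≤ θ 0 := by
        rw [hθdef]
        apply div_le_div_of_nonneg_left (by positivity) (by positivity)
        have : (2:ℝ)^(0+1) ≤ 2^(n+1) := by
          apply pow_le_pow_right₀ (by norm_num); omega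
        nlinarith
      have h0 : θ 0 = 5 * π / 6 := by rw [hθdef]; norm_num
      rw [h0] at h
      linarith
  have hx : ∀ n, 1 ≤ n → Real.sqrt (2 - c n) = 2 * Real.sin (θ n / 2) := by
    intro n hn
    rw [key n hn]
    have hc2 : Real.cos (θ n) = 2 * Real.cos (θ n / 2) ^ 2 - 1 := by
      have h := Real.cos_two_mul (θ n / 2)
      rw [show 2 * (θ n / 2) = θ n by ring] at h
      exact h
    have hpyth : Real.sin (θ n / 2) ^ 2 + Real.cos (θ n / 2) ^ 2 = 1 :=
      Real.sin_sq_add_cos_sq _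
    have hsq : (2 : ℝ) - 2 * Real.cos (θ n) = (2 * Real.sin (θ n / 2)) ^ 2 := by
      rw [hc2]; nlinarith
    rw [hsq, Real.sqrt_sq (by have := hsinpos n; linarith)]
  -- the limit
  set a : ℝ := 5 * π / 3 with hadef
  have ha : (0 : ℝ) < a := by rw [hadef]; positivity
  have hxn : Tendsto (fun n : ℕ => a / 2 ^ (n + 2)) atTop (𝓝 0) := by
    apply Tendsto.div_atTop tendsto_const_nhds
    exact (tendsto_pow_atTop_atTop_of_one_lt (by norm_num : (1:ℝ) < 2)).comp
      (tendsto_add_atTop_nat 2)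
  have hxn' : Tendsto (fun n : ℕ => a / 2 ^ (n + 2)) atTop (𝓝[≠] 0) := by
    apply tendsto_nhdsWithin_of_tendsto_nhds_of_eventually_within _ hxn
    filter_upwards with n
    have : (0:ℝ) < a / 2 ^ (n + 2) := by positivity
    exact this.ne'
  have hd : Tendsto (slope Real.sin 0) (𝓝[≠] 0) (𝓝 1) := by
    have h := Real.hasDerivAt_sin 0
    rw [Real.cos_zero] at h
    exact hasDerivAt_iff_tendsto_slope.mp h
  have hslope : Tendsto (fun x : ℝ => Real.sin x / x) (𝓝[≠] 0) (𝓝 1) := by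
    refine hd.congr fun x => ?_
    simp [slope_def_field]
  have hmain : Tendsto
      (fun n : ℕ => (3 / 5 : ℝ) * a * (Real.sin (a / 2 ^ (n + 2)) / (a / 2 ^ (n + 2))))
      atTop (𝓝 π) := by
    have h := (hslope.comp hxn').const_mul ((3 / 5 : ℝ) * a)
    have heq : (3 / 5 : ℝ) * a * 1 = π := by rw [mul_one, hadef]; ring
    rw [heq] at h
    exact h
  apply hmain.congr'
  filter_upwards [eventually_ge_atTop 1] with n hn
  have hxeq : θ n / 2 = a / 2 ^ (n + 2) := by
    rw [hθdef, hadef]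
    simp only
    rw [pow_succ]
    field_simp
    ring
  rw [hx n hn, hxeq]
  have hne : a / 2 ^ (n + 2) ≠ 0 := by positivity
  field_simp
  rw [pow_succ]
  ring
end
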